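/- Let ψ₂^ℓ be as in the convex lower kernel and α_d = √(2(d+3)/(d+1)). Then for every function s: {‖x‖≤1} → ℝ with s(0) ≥ 0 such that x ↦ s(x/α_d) (supported on {‖y‖ ≤ α_d}) is differentiable with Σᵢ|∂ᵢ of it at y − ∂ᵢ at z| ≤ ‖y−z‖ for all y,z, one has ⟨s, ψ₂^ℓ⟩ ≥ ‖ψ₂^ℓ‖² − ⟨1, ψ₂^ℓ⟩, where ⟨f,g⟩ = ∫ f·g over the unit ball and ‖ψ₂^ℓ‖² = ⟨ψ₂^ℓ,ψ₂^ℓ⟩. -/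

import Mathlib

open MeasureTheory

/-- The convex lower kernel `ψ₂ℓ(x) = 1 - ((2d+4)/(d+1))‖x‖ + ((d+3)/(d+1))‖x‖²`
(used on the unit ball). -/
noncomputable def psiTwoL (d : ℕ) (x : EuclideanSpace ℝ (Fin d)) : ℝ :=
  1 - ((2 * (d : ℝ) + 4) / ((d : ℝ) + 1)) * ‖x‖ + (((d : ℝ) + 3) / ((d : ℝ) + 1)) * ‖x‖ ^ 2

/-- `α_d = √(2(d+3)/(d+1))`. -/
noncomputable def alphaD (d : ℕ) : ℝ := Real.sqrt (2 * ((d : ℝ) + 3) / ((d : ℝ) + 1))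

/-!
Write `ψ₂ℓ(x) = p(‖x‖)` with `p(t) = 1 - A t + B t² = (1 - t)(1 - B t)`, where
`A = (2d+4)/(d+1) = 1 + B`, `B = (d+3)/(d+1)`, and let `w(t) = t^(d-1) p(t)`. In polar coordinates
both sides become integrals over the unit sphere of radial integrals against `w`.
Since `p² - p = B t² p - A t p` and `∫₀¹ t w = 0`, the left side is `σ B ∫₀¹ t² w`, `σ` the area of
the sphere. For a direction `u` put `v = α_d u`, so that `‖v‖²/2 = B`, and `g(y) = s(y/α_d)`.
The derivative condition makes `∇g` 1-Lipschitz, so `e(t) = B t² - g(t v) + g(0)` is convex with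
`e(0) = 0`. As `w ≥ 0` on `[0, 1/B]`, `w ≤ 0` on `[1/B, 1]` and `∫₀¹ t w = 0`, comparing `e` with
its chord through `0` and `1/B` gives `∫₀¹ e w ≤ 0`. With `g(0) ∫₀¹ w ≥ 0` this is
`∫₀¹ s(t u) w(t) dt ≥ B ∫₀¹ t² w` for every direction `u`, and integrating over `u` concludes.
-/

open Set Metric

theorem ConvexOn.integral_mul_nonpos_of_sign_change {e w : ℝ → ℝ} {b c : ℝ} (hc : c ∈ Ioc 0 b)
    (he : ConvexOn ℝ (Icc 0 b) e) (he0 : e 0 = 0)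
    (hw_nonneg : ∀ t ∈ Icc 0 c, 0 ≤ w t) (hw_nonpos : ∀ t ∈ Icc c b, w t ≤ 0)
    (hmoment : ∫ t in 0..b, t * w t = 0)
    (hew : IntervalIntegrable (fun t => e t * w t) volume 0 b)
    (htw : IntervalIntegrable (fun t => t * w t) volume 0 b) :
    ∫ t in 0..b, e t * w t ≤ 0 := by
  have hb : 0 ≤ b := hc.1.le.trans hc.2
  have h0 : (0 : ℝ) ∈ Icc 0 b := ⟨le_rfl, hb⟩
  have hcmem : c ∈ Icc 0 b := ⟨hc.1.le, hc.2⟩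
  -- `e` lies below its chord through `0` and `c` on `[0, c]` and above it on `[c, b]`.
  have hslope : ∀ {x y}, x ∈ Icc 0 b → y ∈ Icc 0 b → 0 < x → x ≤ y → e x / x ≤ e y / y := by
    intro x y hx hy hx0 hxy
    simpa [he0] using he.secant_mono h0 hx hy hx0.ne' (hx0.trans_le hxy).ne' hxy
  have hpt : ∀ t ∈ Icc 0 b, e t * w t ≤ e c / c * (t * w t) := by
    rintro t ⟨ht0, htb⟩
    rcases ht0.eq_or_lt with rfl | ht0
    · simp [he0]
    rcases le_total t c with htc | hct
    · have := hslope ⟨ht0.le, htb⟩ hcmem ht0 htc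
      rw [div_le_iff₀ ht0] at this
      nlinarith [hw_nonneg t ⟨ht0.le, htc⟩]
    · have := hslope hcmem ⟨ht0.le, htb⟩ hc.1 hct
      rw [le_div_iff₀ ht0] at this
      nlinarith [hw_nonpos t ⟨hct, htb⟩]
  calc ∫ t in 0..b, e t * w t ≤ ∫ t in 0..b, e c / c * (t * w t) :=
        intervalIntegral.integral_mono_on hb hew (htw.const_mul _) hpt
    _ = 0 := by rw [intervalIntegral.integral_const_mul, hmoment, mul_zero]

theorem convexOn_univ_half_mul_sq_sub_of_hasDerivAt {k k' : ℝ → ℝ} {L : ℝ} (hk : ∀ t, HasDerivAt k (k' t) t)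
    (hk' : ∀ s t, s ≤ t → k' t - k' s ≤ L * (t - s)) :
    ConvexOn ℝ univ (fun t => L / 2 * t ^ 2 - k t) := by
  have hderiv : ∀ t, HasDerivAt (fun t => L / 2 * t ^ 2 - k t) (L * t - k' t) t := by
    intro t
    refine (((hasDerivAt_pow 2 t).const_mul (L / 2)).sub (hk t)).congr_deriv ?_
    norm_num
    ring
  refine Monotone.convexOn_univ_of_deriv (fun t => (hderiv t).differentiableAt) ?_
  intro s t hst
  rw [(hderiv s).deriv, (hderiv t).deriv]
  linarith [hk' s t hst]

theorem abs_apply_le_sum_abs_apply_single_mul_norm {ι : Type*} [Fintype ι] [DecidableEq ι]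
    (L : EuclideanSpace ℝ ι →L[ℝ] ℝ) (v : EuclideanSpace ℝ ι) :
    |L v| ≤ (∑ i, |L (EuclideanSpace.single i 1)|) * ‖v‖ := by
  have hv : v = ∑ i, v i • EuclideanSpace.single i (1 : ℝ) := by
    simpa using ((EuclideanSpace.basisFun ι ℝ).sum_repr v).symm
  calc |L v| = |∑ i, v i * L (EuclideanSpace.single i 1)| := by
        conv_lhs => rw [hv]
        simp [map_sum]
    _ ≤ ∑ i, |v i| * |L (EuclideanSpace.single i 1)| := by
        exact (Finset.abs_sum_le_sum_abs _ _).trans_eq (by simp only [abs_mul])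
    _ ≤ ∑ i, ‖v‖ * |L (EuclideanSpace.single i 1)| := by
        gcongr with i
        exact PiLp.norm_apply_le v i
    _ = (∑ i, |L (EuclideanSpace.single i 1)|) * ‖v‖ := by rw [← Finset.mul_sum, mul_comm]

theorem convexOn_univ_half_norm_sq_mul_sq_sub_comp_smul {ι : Type*} [Fintype ι] [DecidableEq ι]
    {g : EuclideanSpace ℝ ι → ℝ} (hg : Differentiable ℝ g)
    (hlip : ∀ y z, ∑ i, |fderiv ℝ g y (EuclideanSpace.single i 1) -
      fderiv ℝ g z (EuclideanSpace.single i 1)| ≤ ‖y - z‖)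
    (v : EuclideanSpace ℝ ι) :
    ConvexOn ℝ univ (fun t : ℝ => ‖v‖ ^ 2 / 2 * t ^ 2 - g (t • v)) := by
  refine convexOn_univ_half_mul_sq_sub_of_hasDerivAt (k' := fun t => fderiv ℝ g (t • v) v)
    (fun t => ?_) fun s t hst => ?_
  · have := (hg (t • v)).hasFDerivAt.comp_hasDerivAt t ((hasDerivAt_id t).smul_const v)
    rwa [one_smul] at this
  · have := abs_apply_le_sum_abs_apply_single_mul_norm (fderiv ℝ g (t • v) - fderiv ℝ g (s • v)) v
    simp only [sub_apply] at this
    calc fderiv ℝ g (t • v) v - fderiv ℝ g (s • v) v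
        ≤ (∑ i, |fderiv ℝ g (t • v) (EuclideanSpace.single i 1) -
            fderiv ℝ g (s • v) (EuclideanSpace.single i 1)|) * ‖v‖ := (le_abs_self _).trans this
      _ ≤ ‖t • v - s • v‖ * ‖v‖ := by gcongr; exact hlip _ _
      _ = ‖v‖ ^ 2 * (t - s) := by
        rw [← sub_smul, norm_smul, Real.norm_of_nonneg (sub_nonneg.2 hst)]; ring

section Polar

variable {E : Type*} [NormedAddCommGroup E] [NormedSpace ℝ E]

theorem MeasureTheory.Measure.integral_volumeIoiPow (n : ℕ) (f : ℝ → ℝ) :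
    ∫ r, f r ∂(Measure.volumeIoiPow n) = ∫ r in Ioi 0, r ^ n * f r := by
  simp only [Measure.volumeIoiPow, ENNReal.ofReal]
  rw [integral_withDensity_eq_integral_smul ((measurable_subtype_coe.pow_const _).real_toNNReal),
    integral_subtype_comap measurableSet_Ioi fun r => (r ^ n).toNNReal • f r]
  refine setIntegral_congr_fun measurableSet_Ioi fun r hr => ?_
  rw [NNReal.smul_def, Real.coe_toNNReal _ (pow_nonneg (le_of_lt hr) _), smul_eq_mul]

theorem integral_volumeIoiPow_indicator_closedBall (n : ℕ) (F : E → ℝ) (u : sphere (0 : E) 1) :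
    ∫ r, (closedBall (0 : E) 1).indicator F ((r : ℝ) • (u : E)) ∂(Measure.volumeIoiPow n) =
      ∫ t in 0..1, t ^ n * F (t • (u : E)) := by
  have hsphere : ‖(u : E)‖ = 1 := mem_sphere_zero_iff_norm.1 u.2
  rw [Measure.integral_volumeIoiPow n fun r => (closedBall (0 : E) 1).indicator F (r • (u : E)),
    intervalIntegral.integral_of_le zero_le_one,
    ← inter_eq_right.2 (Ioc_subset_Ioi_self : Ioc (0 : ℝ) 1 ⊆ Ioi 0),
    ← setIntegral_indicator measurableSet_Ioc]
  refine setIntegral_congr_fun measurableSet_Ioi fun r (hr : 0 < r) => ?_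
  have hball : r • (u : E) ∈ closedBall 0 1 ↔ r ∈ Ioc 0 1 := by
    simp [norm_smul, hsphere, abs_of_pos hr, hr]
  by_cases h : r ∈ Ioc 0 1
  · rw [indicator_of_mem (hball.2 h), indicator_of_mem h]
  · rw [indicator_of_notMem (mt hball.1 h), indicator_of_notMem h, mul_zero]

variable [FiniteDimensional ℝ E] [MeasurableSpace E] [BorelSpace E] (μ : Measure E)
  [μ.IsAddHaarMeasure]

theorem integral_eq_integral_sphere_prod [Nontrivial E] (G : E → ℝ) :
    ∫ x, G x ∂μ = ∫ p, G ((p.2 : ℝ) • (p.1 : E))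
      ∂(μ.toSphere.prod (Measure.volumeIoiPow (Module.finrank ℝ E - 1))) := by
  calc ∫ x, G x ∂μ = ∫ x : ({0}ᶜ : Set E), G x ∂(μ.comap Subtype.val) := by
        rw [integral_subtype_comap (measurableSet_singleton _).compl, restrict_compl_singleton]
    _ = _ := by
        rw [← μ.measurePreserving_homeomorphUnitSphereProd.integral_comp
          (Homeomorph.measurableEmbedding _)]
        refine integral_congr_ae (.of_forall fun x => ?_)
        simp [smul_inv_smul₀ (norm_ne_zero_iff.2 x.2)]

theorem MeasureTheory.Integrable.comp_smul_sphere_prod {G : E → ℝ} (hG : Integrable G μ) :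
    Integrable (fun p : sphere (0 : E) 1 × Ioi (0 : ℝ) => G ((p.2 : ℝ) • (p.1 : E)))
      (μ.toSphere.prod (Measure.volumeIoiPow (Module.finrank ℝ E - 1))) := by
  rw [← μ.measurePreserving_homeomorphUnitSphereProd.integrable_comp_emb
    (Homeomorph.measurableEmbedding _)]
  have h := (integrableOn_iff_comap_subtypeVal (measurableSet_singleton (0 : E)).compl).1
    hG.integrableOn
  refine h.congr (.of_forall fun x => ?_)
  simp [smul_inv_smul₀ (norm_ne_zero_iff.2 x.2)]

theorem integral_closedBall_eq_integral_sphere [Nontrivial E] {F : E → ℝ}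
    (hF : IntegrableOn F (closedBall 0 1) μ) :
    ∫ x in closedBall 0 1, F x ∂μ =
      ∫ u, (∫ t in 0..1, t ^ (Module.finrank ℝ E - 1) * F (t • (u : E))) ∂μ.toSphere := by
  have hG := (integrable_indicator_iff measurableSet_closedBall).2 hF
  rw [← integral_indicator measurableSet_closedBall, integral_eq_integral_sphere_prod,
    integral_prod _ (hG.comp_smul_sphere_prod μ)]
  exact integral_congr_ae (.of_forall (integral_volumeIoiPow_indicator_closedBall _ F))

theorem integrable_integral_closedBall_sphere {F : E → ℝ}
    (hF : IntegrableOn F (closedBall 0 1) μ) :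
    Integrable (fun u : sphere (0 : E) 1 =>
      ∫ t in 0..1, t ^ (Module.finrank ℝ E - 1) * F (t • (u : E))) μ.toSphere := by
  have hG := (integrable_indicator_iff measurableSet_closedBall).2 hF
  exact (hG.comp_smul_sphere_prod μ).integral_prod_left.congr
    (.of_forall (integral_volumeIoiPow_indicator_closedBall _ F))

theorem integral_closedBall_eq_mul_of_forall_sphere [Nontrivial E] {F : E → ℝ}
    (hF : IntegrableOn F (closedBall 0 1) μ) {c : ℝ}
    (h : ∀ u : sphere (0 : E) 1, ∫ t in 0..1, t ^ (Module.finrank ℝ E - 1) * F (t • (u : E)) = c) :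
    ∫ x in closedBall 0 1, F x ∂μ = μ.toSphere.real univ * c := by
  rw [integral_closedBall_eq_integral_sphere μ hF, integral_congr_ae (.of_forall h),
    integral_const, smul_eq_mul]

theorem mul_le_integral_closedBall_of_forall_sphere [Nontrivial E] {F : E → ℝ}
    (hF : IntegrableOn F (closedBall 0 1) μ) {c : ℝ}
    (h : ∀ u : sphere (0 : E) 1, c ≤ ∫ t in 0..1, t ^ (Module.finrank ℝ E - 1) * F (t • (u : E))) :
    μ.toSphere.real univ * c ≤ ∫ x in closedBall 0 1, F x ∂μ := by
  rw [integral_closedBall_eq_integral_sphere μ hF, ← smul_eq_mul, ← integral_const]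
  exact integral_mono (integrable_const c) (integrable_integral_closedBall_sphere μ hF) h

end Polar

noncomputable def psiTwoLProfile (d : ℕ) (t : ℝ) : ℝ :=
  1 - ((2 * (d : ℝ) + 4) / ((d : ℝ) + 1)) * t + (((d : ℝ) + 3) / ((d : ℝ) + 1)) * t ^ 2

noncomputable def psiTwoLWeight (d : ℕ) (t : ℝ) : ℝ := t ^ (d - 1) * psiTwoLProfile d t

theorem psiTwoL_eq_psiTwoLProfile (d : ℕ) (x : EuclideanSpace ℝ (Fin d)) :
    psiTwoL d x = psiTwoLProfile d ‖x‖ := rfl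

theorem continuous_psiTwoLProfile (d : ℕ) : Continuous (psiTwoLProfile d) := by
  unfold psiTwoLProfile; fun_prop

theorem continuous_psiTwoLWeight (d : ℕ) : Continuous (psiTwoLWeight d) :=
  (continuous_pow _).mul (continuous_psiTwoLProfile d)

theorem psiTwoLProfile_eq_mul (d : ℕ) (t : ℝ) :
    psiTwoLProfile d t = (1 - t) * (1 - ((d : ℝ) + 3) / ((d : ℝ) + 1) * t) := by
  unfold psiTwoLProfile
  field_simp
  ring

theorem psiTwoL_smul_of_norm_eq_one {d : ℕ} {u : EuclideanSpace ℝ (Fin d)} (hu : ‖u‖ = 1)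
    {t : ℝ} (ht : 0 ≤ t) : psiTwoL d (t • u) = psiTwoLProfile d t := by
  rw [psiTwoL_eq_psiTwoLProfile, norm_smul, hu, mul_one, Real.norm_of_nonneg ht]

theorem psiTwoLWeight_nonneg (d : ℕ) {t : ℝ} (ht0 : 0 ≤ t)
    (ht : t ≤ ((d : ℝ) + 1) / ((d : ℝ) + 3)) :
    0 ≤ psiTwoLWeight d t := by
  have hBt : ((d : ℝ) + 3) / ((d : ℝ) + 1) * t ≤ 1 := by
    rw [le_div_iff₀ (by positivity)] at ht
    rw [div_mul_eq_mul_div, div_le_one (by positivity)]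
    linarith
  have ht1 : t ≤ 1 := ht.trans (div_le_one_of_le₀ (by linarith) (by positivity))
  rw [psiTwoLWeight, psiTwoLProfile_eq_mul]
  exact mul_nonneg (pow_nonneg ht0 _) (mul_nonneg (by linarith) (by linarith))

theorem psiTwoLWeight_nonpos (d : ℕ) {t : ℝ} (ht : ((d : ℝ) + 1) / ((d : ℝ) + 3) ≤ t)
    (ht1 : t ≤ 1) : psiTwoLWeight d t ≤ 0 := by
  have hBt : 1 ≤ ((d : ℝ) + 3) / ((d : ℝ) + 1) * t := by
    rw [div_le_iff₀ (by positivity)] at ht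
    rw [div_mul_eq_mul_div, one_le_div (by positivity)]
    linarith
  have ht0 : 0 ≤ t := le_trans (by positivity) ht
  rw [psiTwoLWeight, psiTwoLProfile_eq_mul]
  exact mul_nonpos_of_nonneg_of_nonpos (pow_nonneg ht0 _)
    (mul_nonpos_of_nonneg_of_nonpos (by linarith) (by linarith))

theorem integral_pow_mul_psiTwoLWeight {d : ℕ} (hd : 1 ≤ d) (k : ℕ) :
    ∫ t in 0..1, t ^ k * psiTwoLWeight d t =
      1 / ((k : ℝ) + d) - (2 * (d : ℝ) + 4) / ((d : ℝ) + 1) / ((k : ℝ) + d + 1) +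
        ((d : ℝ) + 3) / ((d : ℝ) + 1) / ((k : ℝ) + d + 2) := by
  obtain ⟨m, rfl⟩ := Nat.exists_eq_add_of_le' hd
  have hexpand : (fun t : ℝ => t ^ k * psiTwoLWeight (m + 1) t) = fun t =>
      t ^ (k + m) - (2 * ((m + 1 : ℕ) : ℝ) + 4) / (((m + 1 : ℕ) : ℝ) + 1) * t ^ (k + m + 1) +
        (((m + 1 : ℕ) : ℝ) + 3) / (((m + 1 : ℕ) : ℝ) + 1) * t ^ (k + m + 2) := by
    funext t
    simp only [psiTwoLWeight, psiTwoLProfile, Nat.add_sub_cancel]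
    ring
  rw [hexpand, intervalIntegral.integral_add, intervalIntegral.integral_sub,
    intervalIntegral.integral_const_mul, intervalIntegral.integral_const_mul, integral_pow,
    integral_pow, integral_pow]
  · push_cast; ring
  all_goals exact Continuous.intervalIntegrable (by fun_prop) _ _

theorem integral_mul_psiTwoLWeight {d : ℕ} (hd : 1 ≤ d) :
    ∫ t in 0..1, t * psiTwoLWeight d t = 0 := by
  have h := integral_pow_mul_psiTwoLWeight hd 1
  simp only [pow_one] at h
  rw [h]
  field_simp
  ring

theorem integral_psiTwoLWeight {d : ℕ} (hd : 1 ≤ d) :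
    ∫ t in 0..1, psiTwoLWeight d t = 2 / ((d : ℝ) * ((d : ℝ) + 1) ^ 2 * ((d : ℝ) + 2)) := by
  have h := integral_pow_mul_psiTwoLWeight hd 0
  simp only [pow_zero, one_mul, Nat.cast_zero, zero_add] at h
  have hd' : (d : ℝ) ≠ 0 := by positivity
  rw [h]
  field_simp
  ring

theorem integral_psiTwoLProfile_mul_self_sub {d : ℕ} (hd : 1 ≤ d) :
    ∫ t in 0..1, t ^ (d - 1) * (psiTwoLProfile d t * psiTwoLProfile d t - psiTwoLProfile d t) =
      ((d : ℝ) + 3) / ((d : ℝ) + 1) * ∫ t in 0..1, t ^ 2 * psiTwoLWeight d t := by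
  have hexpand : (fun t : ℝ => t ^ (d - 1) *
      (psiTwoLProfile d t * psiTwoLProfile d t - psiTwoLProfile d t)) = fun t =>
        ((d : ℝ) + 3) / ((d : ℝ) + 1) * (t ^ 2 * psiTwoLWeight d t) -
          (2 * (d : ℝ) + 4) / ((d : ℝ) + 1) * (t * psiTwoLWeight d t) := by
    funext t
    simp only [psiTwoLWeight]
    rw [psiTwoLProfile]
    ring
  have hw := continuous_psiTwoLWeight d
  rw [hexpand, intervalIntegral.integral_sub, intervalIntegral.integral_const_mul,
    intervalIntegral.integral_const_mul, integral_mul_psiTwoLWeight hd, mul_zero, sub_zero]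
  all_goals exact Continuous.intervalIntegrable (by fun_prop) _ _

theorem integral_mul_psiTwoLWeight_nonpos_of_convexOn {d : ℕ} (hd : 1 ≤ d) {e : ℝ → ℝ}
    (he : ConvexOn ℝ (Icc 0 1) e) (he0 : e 0 = 0) (hec : Continuous e) :
    ∫ t in 0..1, e t * psiTwoLWeight d t ≤ 0 := by
  have hw := continuous_psiTwoLWeight d
  refine he.integral_mul_nonpos_of_sign_change
    ⟨by positivity, div_le_one_of_le₀ (by linarith) (by positivity)⟩ he0
    (fun t ht => psiTwoLWeight_nonneg d ht.1 ht.2) (fun t ht => psiTwoLWeight_nonpos d ht.1 ht.2)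
    (integral_mul_psiTwoLWeight hd) ?_ ?_
  · exact (hec.mul hw).intervalIntegrable _ _
  · exact (continuous_id.mul hw).intervalIntegrable _ _

theorem half_norm_sq_mul_integral_le_integral_comp_smul_mul_psiTwoLWeight {ι : Type*}
    [Fintype ι] [DecidableEq ι] {d : ℕ} (hd : 1 ≤ d)
    {g : EuclideanSpace ℝ ι → ℝ} (hg : Differentiable ℝ g)
    (hlip : ∀ y z, ∑ i, |fderiv ℝ g y (EuclideanSpace.single i 1) -
      fderiv ℝ g z (EuclideanSpace.single i 1)| ≤ ‖y - z‖)
    (hg0 : 0 ≤ g 0) (v : EuclideanSpace ℝ ι) :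
    ‖v‖ ^ 2 / 2 * ∫ t in 0..1, t ^ 2 * psiTwoLWeight d t ≤
      ∫ t in 0..1, g (t • v) * psiTwoLWeight d t := by
  set w := psiTwoLWeight d
  have hw : Continuous w := continuous_psiTwoLWeight d
  have hgc : Continuous g := hg.continuous
  have hconvex : ConvexOn ℝ (Icc 0 1) (fun t : ℝ => ‖v‖ ^ 2 / 2 * t ^ 2 - g (t • v) + g 0) :=
    ((convexOn_univ_half_norm_sq_mul_sq_sub_comp_smul hg hlip v).add_const _).subset
      (subset_univ _) (convex_Icc 0 1)
  have hnonpos := integral_mul_psiTwoLWeight_nonpos_of_convexOn hd hconvex (by simp) (by fun_prop)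
  have hsplit : ∫ t in 0..1, (‖v‖ ^ 2 / 2 * t ^ 2 - g (t • v) + g 0) * w t =
      ‖v‖ ^ 2 / 2 * (∫ t in 0..1, t ^ 2 * w t) - (∫ t in 0..1, g (t • v) * w t) +
        g 0 * ∫ t in 0..1, w t := by
    simp only [add_mul, sub_mul, mul_assoc]
    rw [intervalIntegral.integral_add, intervalIntegral.integral_sub,
      intervalIntegral.integral_const_mul, intervalIntegral.integral_const_mul]
    all_goals exact Continuous.intervalIntegrable (by fun_prop) _ _
  have hw0 : 0 ≤ g 0 * ∫ t in 0..1, w t := by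
    rw [integral_psiTwoLWeight hd]
    positivity
  linarith

theorem alphaD_sq (d : ℕ) : alphaD d ^ 2 = 2 * (((d : ℝ) + 3) / ((d : ℝ) + 1)) := by
  rw [alphaD, Real.sq_sqrt (by positivity), mul_div_assoc]

theorem nontrivial_euclideanSpace_fin {d : ℕ} (hd : 1 ≤ d) :
    Nontrivial (EuclideanSpace ℝ (Fin d)) :=
  Module.nontrivial_of_finrank_pos (R := ℝ) (by rw [finrank_euclideanSpace_fin]; omega)

theorem continuous_psiTwoL (d : ℕ) : Continuous (psiTwoL d) :=
  (continuous_psiTwoLProfile d).comp continuous_norm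

theorem integral_closedBall_psiTwoL_mul_self_sub {d : ℕ} (hd : 1 ≤ d) :
    (∫ x in closedBall (0 : EuclideanSpace ℝ (Fin d)) 1, psiTwoL d x * psiTwoL d x) -
      ∫ x in closedBall (0 : EuclideanSpace ℝ (Fin d)) 1, psiTwoL d x =
    (volume : Measure (EuclideanSpace ℝ (Fin d))).toSphere.real univ *
      (((d : ℝ) + 3) / ((d : ℝ) + 1) * ∫ t in 0..1, t ^ 2 * psiTwoLWeight d t) := by
  have := nontrivial_euclideanSpace_fin hd
  have hψ := continuous_psiTwoL d
  have hint {f : EuclideanSpace ℝ (Fin d) → ℝ} (hf : Continuous f) :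
      IntegrableOn f (closedBall 0 1) :=
    hf.continuousOn.integrableOn_compact (isCompact_closedBall 0 1)
  rw [← integral_sub (hint (by fun_prop)) (hint hψ)]
  refine integral_closedBall_eq_mul_of_forall_sphere _ (hint (by fun_prop)) fun u => ?_
  rw [finrank_euclideanSpace_fin, ← integral_psiTwoLProfile_mul_self_sub hd]
  refine intervalIntegral.integral_congr fun t ht => ?_
  rw [psiTwoL_smul_of_norm_eq_one (mem_sphere_zero_iff_norm.1 u.2)
    (uIcc_of_le (zero_le_one' ℝ) ▸ ht).1]

theorem mul_integral_le_integral_smul_mul_psiTwoL {d : ℕ} (hd : 1 ≤ d)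
    {s : EuclideanSpace ℝ (Fin d) → ℝ} (hs0 : 0 ≤ s 0)
    (hdiff : Differentiable ℝ (fun y : EuclideanSpace ℝ (Fin d) => s ((alphaD d)⁻¹ • y)))
    (hlip : ∀ y z : EuclideanSpace ℝ (Fin d),
      ∑ i, |fderiv ℝ (fun y : EuclideanSpace ℝ (Fin d) => s ((alphaD d)⁻¹ • y)) y
              (EuclideanSpace.single i 1) -
            fderiv ℝ (fun y : EuclideanSpace ℝ (Fin d) => s ((alphaD d)⁻¹ • y)) z
              (EuclideanSpace.single i 1)| ≤ ‖y - z‖)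
    {u : EuclideanSpace ℝ (Fin d)} (hu : ‖u‖ = 1) :
    ((d : ℝ) + 3) / ((d : ℝ) + 1) * ∫ t in 0..1, t ^ 2 * psiTwoLWeight d t ≤
      ∫ t in 0..1, t ^ (d - 1) * (s (t • u) * psiTwoL d (t • u)) := by
  have hα : alphaD d ≠ 0 := (Real.sqrt_pos.2 (by positivity)).ne'
  have hB : ((d : ℝ) + 3) / ((d : ℝ) + 1) = ‖alphaD d • u‖ ^ 2 / 2 := by
    rw [norm_smul, hu, mul_one, Real.norm_eq_abs, sq_abs, alphaD_sq]
    ring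
  calc _ ≤ ∫ t in 0..1, s ((alphaD d)⁻¹ • t • alphaD d • u) * psiTwoLWeight d t := by
        rw [hB]
        exact half_norm_sq_mul_integral_le_integral_comp_smul_mul_psiTwoLWeight hd hdiff hlip
          (by simpa using hs0) _
    _ = _ := intervalIntegral.integral_congr fun t ht => by
        rw [smul_comm t, inv_smul_smul₀ hα,
          psiTwoL_smul_of_norm_eq_one hu (uIcc_of_le (zero_le_one' ℝ) ▸ ht).1, psiTwoLWeight]
        ring

/-- Key lemma for the convex lower bound: if `s(0) ≥ 0` and the rescaled function
`y ↦ s(y/α_d)` is differentiable with `Σᵢ |∂ᵢ(y) - ∂ᵢ(z)| ≤ ‖y - z‖` (the class `H'₂,₁`),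
then `⟨s, ψ₂ℓ⟩ ≥ ‖ψ₂ℓ‖² - ⟨1, ψ₂ℓ⟩`, the inner products being over the unit ball. -/
theorem convex_lower_kernel_key {d : ℕ} (hd : 1 ≤ d)
    (s : EuclideanSpace ℝ (Fin d) → ℝ) (hs0 : 0 ≤ s 0)
    (hdiff : Differentiable ℝ (fun y : EuclideanSpace ℝ (Fin d) => s ((alphaD d)⁻¹ • y)))
    (hlip : ∀ y z : EuclideanSpace ℝ (Fin d),
      ∑ i, |fderiv ℝ (fun y : EuclideanSpace ℝ (Fin d) => s ((alphaD d)⁻¹ • y)) y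
              (EuclideanSpace.single i 1) -
            fderiv ℝ (fun y : EuclideanSpace ℝ (Fin d) => s ((alphaD d)⁻¹ • y)) z
              (EuclideanSpace.single i 1)| ≤ ‖y - z‖) :
    (∫ x in Metric.closedBall (0 : EuclideanSpace ℝ (Fin d)) 1, psiTwoL d x * psiTwoL d x) -
      (∫ x in Metric.closedBall (0 : EuclideanSpace ℝ (Fin d)) 1, psiTwoL d x) ≤
    ∫ x in Metric.closedBall (0 : EuclideanSpace ℝ (Fin d)) 1, s x * psiTwoL d x := by
  have := nontrivial_euclideanSpace_fin hd
  have hα : alphaD d ≠ 0 := (Real.sqrt_pos.2 (by positivity)).ne'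
  have hs : Continuous s := by
    convert hdiff.continuous.comp (continuous_const_smul (alphaD d)) using 1
    ext x
    simp [inv_smul_smul₀ hα]
  rw [integral_closedBall_psiTwoL_mul_self_sub hd]
  refine mul_le_integral_closedBall_of_forall_sphere _
    ((hs.mul (continuous_psiTwoL d)).continuousOn.integrableOn_compact (isCompact_closedBall 0 1))
    fun u => ?_
  rw [finrank_euclideanSpace_fin]
  exact mul_integral_le_integral_smul_mul_psiTwoL hd hs0 hdiff hlip (mem_sphere_zero_iff_norm.1 u.2)
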